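/- arXiv:2211.06800 — 2 statements merged into one kernel-verified Lean document; each statement's English description precedes it below -/
import Mathlib

section
/- Suppose f, g : [0,1] → ℝ are continuous strictly increasing functions with f(0)·g(0) = 0, and the separable value function v(x,y) = f(x)·g(y) satisfies both Property 1 (for every x > 0, f(x)·g(0) > f(0)·g(1)) and Property 2 (for all x₁, x₂, y₁, y₂ ∈ [0,1] with x₁ + x₂ ≤ 1 and y₁ + y₂ ≤ 1, f(x₁ + x₂)·g(y₁ + y₂) = f(x₁)·g(y₁)·g(y₂) + f(x₂)·g(y₁)·g(y₂)). Then there exist constants c > 1 and c' > 0 such that f(x)·g(y) = c'·x·c^y for all x, y ∈ [0,1]. -/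
lemma cauchy_linear (F : ℝ → ℝ) (hc : ContinuousOn F (Set.Icc 0 1))
    (hadd : ∀ a b : ℝ, 0 ≤ a → 0 ≤ b → a + b ≤ 1 → F (a + b) = F a + F b) :
    ∀ x ∈ Set.Icc (0:ℝ) 1, F x = x * F 1 := by
  have hF0 : F 0 = 0 := by
    have h := hadd 0 0 le_rfl le_rfl (by norm_num)
    simp at h
    linarith
  have hnat : ∀ (n : ℕ) (t : ℝ), 0 ≤ t → (n : ℝ) * t ≤ 1 → F ((n : ℝ) * t) = n * F t := by
    intro n
    induction n with
    | zero => intro t ht h; simpa using hF0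
    | succ n ih =>
      intro t ht h
      have hnn : (0:ℝ) ≤ (n:ℝ) * t := by positivity
      have hnt : (n:ℝ) * t ≤ 1 := by push_cast at h; nlinarith
      have h2 : F ((n:ℝ) * t + t) = F ((n:ℝ) * t) + F t := by
        apply hadd _ t hnn ht
        push_cast at h; linarith
      push_cast
      rw [add_mul, one_mul, h2, ih t ht hnt]
      ring
  have hrat : ∀ (k n : ℕ), 0 < n → k ≤ n → F ((k : ℝ) / n) = ((k : ℝ) / n) * F 1 := by
    intro k n hn hk
    have hne : (n:ℝ) ≠ 0 := Nat.cast_ne_zero.mpr hn.ne'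
    have hnpos : (0:ℝ) < n := by positivity
    have h1 : F ((n:ℝ) * (1/n)) = n * F (1/n) := by
      apply hnat n (1/n) (by positivity)
      rw [mul_one_div, div_self hne]
    rw [mul_one_div, div_self hne] at h1
    have h2 : F ((k:ℝ) * (1/n)) = k * F (1/n) := by
      apply hnat k (1/n) (by positivity)
      rw [mul_one_div]
      apply div_le_one_of_le₀ (by exact_mod_cast hk) hnpos.le
    rw [mul_one_div] at h2
    rw [h2]
    have h3 : (k:ℝ) * F (1/n) * n = (k:ℝ) / n * F 1 * n := by
      field_simp
      linear_combination -(k:ℝ) * h1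
    have := mul_right_cancel₀ hne h3
    linarith [this]
  intro x hx
  obtain ⟨hx0, hx1⟩ := hx
  set a : ℕ → ℝ := fun n => (⌊(n:ℝ) * x⌋₊ : ℝ) / n with ha_def
  have hub : ∀ n : ℕ, 0 < n → a n ≤ x := by
    intro n hn
    have hnpos : (0:ℝ) < n := by positivity
    have := Nat.floor_le (by positivity : (0:ℝ) ≤ (n:ℝ) * x)
    rw [ha_def]
    simp only
    rw [div_le_iff₀ hnpos]
    linarith
  have hlb : ∀ n : ℕ, 0 < n → x - 1/n ≤ a n := by
    intro n hn
    have hnpos : (0:ℝ) < n := by positivity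
    have := Nat.lt_floor_add_one ((n:ℝ) * x)
    rw [ha_def]
    simp only
    rw [le_div_iff₀ hnpos]
    have hinv : (x - 1/(n:ℝ)) * n = x * n - 1 := by field_simp
    linarith [hinv, this, mul_comm x (n:ℝ)]
  have hmem : ∀ n : ℕ, 0 < n → a n ∈ Set.Icc (0:ℝ) 1 := by
    intro n hn
    constructor
    · positivity
    · exact le_trans (hub n hn) hx1
  have haeq : ∀ n : ℕ, 0 < n → F (a n) = a n * F 1 := by
    intro n hn
    have hkn : ⌊(n:ℝ) * x⌋₊ ≤ n := by
      apply Nat.floor_le_of_le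
      calc (n:ℝ) * x ≤ n * 1 := by nlinarith
        _ = n := by ring
    exact hrat _ n hn hkn
  have htend : Filter.Tendsto a Filter.atTop (nhds x) := by
    apply tendsto_of_tendsto_of_tendsto_of_le_of_le'
      (g := fun n : ℕ => x - 1/(n:ℝ)) (h := fun _ : ℕ => x)
    · have : Filter.Tendsto (fun n : ℕ => 1/(n:ℝ)) Filter.atTop (nhds 0) :=
        tendsto_one_div_atTop_nhds_zero_nat
      simpa using (tendsto_const_nhds (x := x)).sub this
    · exact tendsto_const_nhds
    · filter_upwards [Filter.eventually_gt_atTop 0] with n hn using hlb n hn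
    · filter_upwards [Filter.eventually_gt_atTop 0] with n hn using hub n hn
  have htendW : Filter.Tendsto a Filter.atTop (nhdsWithin x (Set.Icc 0 1)) := by
    apply tendsto_nhdsWithin_of_tendsto_nhds_of_eventually_within _ htend
    filter_upwards [Filter.eventually_gt_atTop 0] with n hn using hmem n hn
  have h1 : Filter.Tendsto (fun n => F (a n)) Filter.atTop (nhds (F x)) :=
    (hc x ⟨hx0, hx1⟩).tendsto.comp htendW
  have h2 : Filter.Tendsto (fun n => F (a n)) Filter.atTop (nhds (x * F 1)) := by
    have : Filter.Tendsto (fun n => a n * F 1) Filter.atTop (nhds (x * F 1)) :=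
      htend.mul_const _
    apply this.congr'
    filter_upwards [Filter.eventually_gt_atTop 0] with n hn using (haeq n hn).symm
  exact tendsto_nhds_unique h1 h2

/-- If `f, g : [0,1] → ℝ` are continuous strictly increasing with
`f 0 * g 0 = 0`, satisfying Property 1 (for every `x > 0`,
`f x * g 0 > f 0 * g 1`) and Property 2 (for all `x₁, x₂, y₁, y₂ ∈ [0,1]` with
`x₁ + x₂ ≤ 1` and `y₁ + y₂ ≤ 1`,
`f (x₁ + x₂) * g (y₁ + y₂) = f x₁ * g y₁ * g y₂ + f x₂ * g y₁ * g y₂`),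
then there exist constants `c > 1` and `c' > 0` with
`f x * g y = c' * x * c ^ y` for all `x, y ∈ [0,1]`. -/
theorem value_function_unique_form
    (f g : ℝ → ℝ)
    (hf_cont : ContinuousOn f (Set.Icc 0 1))
    (hg_cont : ContinuousOn g (Set.Icc 0 1))
    (hf_mono : StrictMonoOn f (Set.Icc 0 1))
    (hg_mono : StrictMonoOn g (Set.Icc 0 1))
    (h_norm : f 0 * g 0 = 0)
    (h_prop1 : ∀ x ∈ Set.Icc (0:ℝ) 1, 0 < x → f x * g 0 > f 0 * g 1)
    (h_prop2 : ∀ x₁ ∈ Set.Icc (0:ℝ) 1, ∀ x₂ ∈ Set.Icc (0:ℝ) 1,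
      ∀ y₁ ∈ Set.Icc (0:ℝ) 1, ∀ y₂ ∈ Set.Icc (0:ℝ) 1,
      x₁ + x₂ ≤ 1 → y₁ + y₂ ≤ 1 →
      f (x₁ + x₂) * g (y₁ + y₂) = f x₁ * g y₁ * g y₂ + f x₂ * g y₁ * g y₂) :
    ∃ c : ℝ, 1 < c ∧ ∃ c' : ℝ, 0 < c' ∧
      ∀ x ∈ Set.Icc (0:ℝ) 1, ∀ y ∈ Set.Icc (0:ℝ) 1,
        f x * g y = c' * x * c ^ y := by
  have mem0 : (0:ℝ) ∈ Set.Icc (0:ℝ) 1 := by norm_num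
  have mem1 : (1:ℝ) ∈ Set.Icc (0:ℝ) 1 := by norm_num
  -- f 0 * g 1 = 0
  have hg1z : f 0 * g 1 = 0 := by
    have h := h_prop2 0 mem0 0 mem0 1 mem1 0 mem0 (by norm_num) (by norm_num)
    simp only [add_zero, zero_add] at h
    linear_combination h + 2 * g 1 * h_norm
  have hf1g0 : 0 < f 1 * g 0 := by
    have := h_prop1 1 mem1 one_pos
    rw [hg1z] at this
    exact this
  have hf0 : f 0 = 0 := by
    rcases mul_eq_zero.mp h_norm with h | h
    · exact h
    · exfalso; rw [h, mul_zero] at hf1g0; exact lt_irrefl 0 hf1g0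
  have hf1 : 0 < f 1 := by
    have := hf_mono mem0 mem1 one_pos
    linarith [hf0 ▸ this]
  have hg0pos : 0 < g 0 := by nlinarith
  have hg0 : g 0 = 1 := by
    have h := h_prop2 1 mem1 0 mem0 0 mem0 0 mem0 (by norm_num) (by norm_num)
    simp only [add_zero, zero_add, hf0, zero_mul, mul_zero] at h
    have h' : f 1 * g 0 * 1 = f 1 * g 0 * g 0 := by rw [mul_one]; linarith
    exact (mul_left_cancel₀ hf1g0.ne' h').symm
  -- f additive
  have hfadd : ∀ a b : ℝ, 0 ≤ a → 0 ≤ b → a + b ≤ 1 → f (a + b) = f a + f b := by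
    intro a b ha hb hab
    have h := h_prop2 a ⟨ha, by linarith⟩ b ⟨hb, by linarith⟩ 0 mem0 0 mem0 hab (by norm_num)
    simp only [add_zero, hg0, mul_one] at h
    exact h
  -- g multiplicative
  have hgmul : ∀ a b : ℝ, 0 ≤ a → 0 ≤ b → a + b ≤ 1 → g (a + b) = g a * g b := by
    intro a b ha hb hab
    have h := h_prop2 1 mem1 0 mem0 a ⟨ha, by linarith⟩ b ⟨hb, by linarith⟩ (by norm_num) hab
    simp only [add_zero, hf0, zero_mul, add_zero, mul_assoc] at h
    exact mul_left_cancel₀ hf1.ne' h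
  have hflin := cauchy_linear f hf_cont hfadd
  have hgpos : ∀ y ∈ Set.Icc (0:ℝ) 1, 0 < g y := by
    intro y hy
    rcases eq_or_lt_of_le hy.1 with h | h
    · rw [← h, hg0]; norm_num
    · have := hg_mono mem0 hy h
      rw [hg0] at this; linarith
  have hhadd : ∀ a b : ℝ, 0 ≤ a → 0 ≤ b → a + b ≤ 1 →
      Real.log (g (a + b)) = Real.log (g a) + Real.log (g b) := by
    intro a b ha hb hab
    rw [hgmul a b ha hb hab,
      Real.log_mul (hgpos a ⟨ha, by linarith⟩).ne' (hgpos b ⟨hb, by linarith⟩).ne']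
  have hhcont : ContinuousOn (fun y => Real.log (g y)) (Set.Icc 0 1) :=
    hg_cont.log (fun y hy => (hgpos y hy).ne')
  have hglin := cauchy_linear (fun y => Real.log (g y)) hhcont hhadd
  have hc1 : 1 < g 1 := by
    have := hg_mono mem0 mem1 one_pos
    rwa [hg0] at this
  refine ⟨g 1, hc1, f 1, hf1, ?_⟩
  intro x hx y hy
  have hgx : g y = (g 1) ^ y := by
    have h1 : g y = Real.exp (Real.log (g y)) := (Real.exp_log (hgpos y hy)).symm
    have h2 : Real.log (g y) = y * Real.log (g 1) := hglin y hy
    rw [h1, h2, mul_comm, ← Real.rpow_def_of_pos (by linarith : (0:ℝ) < g 1)]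
  rw [hflin x hx, hgx]
  ring
end

section
/- Suppose f, g : [0,1] → ℝ satisfy Property 2: for all x₁, x₂, y₁, y₂ ∈ [0,1] with x₁ + x₂ ≤ 1 and y₁ + y₂ ≤ 1, f(x₁ + x₂)·g(y₁ + y₂) = f(x₁)·g(y₁)·g(y₂) + f(x₂)·g(y₁)·g(y₂). If f(0) = 0 and there exists x₀ ∈ [0,1] with f(x₀) ≠ 0, then g is multiplicative on [0,1]: for all y₁, y₂ ∈ [0,1] with y₁ + y₂ ≤ 1, g(y₁ + y₂) = g(y₁)·g(y₂). -/
/-- If `f, g : [0,1] → ℝ` satisfy Property 2, `f 0 = 0`, and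
`f x₀ ≠ 0` for some `x₀ ∈ [0,1]`, then `g` is multiplicative on `[0,1]`:
for all `y₁, y₂ ∈ [0,1]` with `y₁ + y₂ ≤ 1`, `g (y₁ + y₂) = g y₁ * g y₂`. -/
theorem g_multiplicative
    (f g : ℝ → ℝ)
    (h_prop2 : ∀ x₁ ∈ Set.Icc (0:ℝ) 1, ∀ x₂ ∈ Set.Icc (0:ℝ) 1,
      ∀ y₁ ∈ Set.Icc (0:ℝ) 1, ∀ y₂ ∈ Set.Icc (0:ℝ) 1,
      x₁ + x₂ ≤ 1 → y₁ + y₂ ≤ 1 →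
      f (x₁ + x₂) * g (y₁ + y₂) = f x₁ * g y₁ * g y₂ + f x₂ * g y₁ * g y₂)
    (hf0 : f 0 = 0)
    (hf_ne : ∃ x₀ ∈ Set.Icc (0:ℝ) 1, f x₀ ≠ 0) :
    ∀ y₁ ∈ Set.Icc (0:ℝ) 1, ∀ y₂ ∈ Set.Icc (0:ℝ) 1,
      y₁ + y₂ ≤ 1 → g (y₁ + y₂) = g y₁ * g y₂ := by
  obtain ⟨x₀, hx₀, hne⟩ := hf_ne
  intro y₁ hy₁ y₂ hy₂ hsum
  have h := h_prop2 x₀ hx₀ 0 (by norm_num) y₁ hy₁ y₂ hy₂ (by simpa using hx₀.2) hsum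
  rw [add_zero, hf0] at h
  have : f x₀ * g (y₁ + y₂) = f x₀ * (g y₁ * g y₂) := by linarith
  exact mul_left_cancel₀ hne this
end
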